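/- Let D be a division ring and X^a, X^b, X^c, Y^a, Y^b, Y^c ∈ D. Define Δ_{bc} = (X^b - X^c)⁻¹(X^a - X^c)·Y^a - Y^b·(Y^b - Y^c)⁻¹·(Y^a - Y^c), and Δ_{cb} by interchanging b and c. Then Δ_{bc} + Δ_{cb} = 0, provided X^b ≠ X^c and Y^b ≠ Y^c. -/

import Mathlib

/-!
Write `u = (X^b - X^c)⁻¹` and `v = (Y^b - Y^c)⁻¹`. In `Δ_{bc} + Δ_{cb}` the `X`-terms collapse to
`u (X^b - X^c) Y^a = Y^a`, and the `Y`-terms collapse to `-(Y^b v - Y^c v) Y^a = -Y^a` up to the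
commutator-like remainder `Y^b v Y^c - Y^c v Y^b`, which vanishes: substituting `Y^b = Y^c + (Y^b - Y^c)`
on the left of the first product and on the right of the second gives `Y^c v Y^c + Y^c` for both.
-/

section

variable {D : Type*} [DivisionRing D]

theorem mul_inv_sub_mul_comm (a b : D) : a * (a - b)⁻¹ * b = b * (a - b)⁻¹ * a := by
  by_cases hab : a - b = 0
  · simp [hab]
  · calc a * (a - b)⁻¹ * b = (b + (a - b)) * (a - b)⁻¹ * b := by rw [add_sub_cancel]
      _ = b * (a - b)⁻¹ * b + b := by simp only [add_mul, mul_inv_cancel₀ hab, one_mul]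
      _ = b * (a - b)⁻¹ * (b + (a - b)) := by
        simp only [mul_add, mul_assoc, inv_mul_cancel₀ hab, mul_one]
      _ = b * (a - b)⁻¹ * a := by rw [add_sub_cancel]

theorem inv_sub_mul_sub_add_inv_sub_mul_sub {b c : D} (hbc : b ≠ c) (a : D) :
    (b - c)⁻¹ * (a - c) + (c - b)⁻¹ * (a - b) = 1 := by
  have hbc' : b - c ≠ 0 := sub_ne_zero_of_ne hbc
  calc (b - c)⁻¹ * (a - c) + (c - b)⁻¹ * (a - b) = (b - c)⁻¹ * ((a - c) - (a - b)) := by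
        rw [← neg_sub b c, inv_neg]; noncomm_ring
    _ = 1 := by rw [sub_sub_sub_cancel_left, inv_mul_cancel₀ hbc']

theorem mul_inv_sub_mul_sub_add_mul_inv_sub_mul_sub {b c : D} (hbc : b ≠ c) (a : D) :
    b * (b - c)⁻¹ * (a - c) + c * (c - b)⁻¹ * (a - b) = a := by
  have hbc' : b - c ≠ 0 := sub_ne_zero_of_ne hbc
  calc b * (b - c)⁻¹ * (a - c) + c * (c - b)⁻¹ * (a - b)
        = (b * (b - c)⁻¹ - c * (b - c)⁻¹) * a - (b * (b - c)⁻¹ * c - c * (b - c)⁻¹ * b) := by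
          rw [← neg_sub b c, inv_neg]; noncomm_ring
    _ = a := by rw [← sub_mul, mul_inv_cancel₀ hbc', one_mul, mul_inv_sub_mul_comm, sub_self, sub_zero]

end

theorem stmt_6 {D : Type*} [DivisionRing D] (Xa Xb Xc Ya Yb Yc : D)
    (hX : Xb ≠ Xc) (hY : Yb ≠ Yc) :
    ((Xb - Xc)⁻¹ * (Xa - Xc) * Ya - Yb * (Yb - Yc)⁻¹ * (Ya - Yc))
      + ((Xc - Xb)⁻¹ * (Xa - Xb) * Ya - Yc * (Yc - Yb)⁻¹ * (Ya - Yb)) = 0 := by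
  calc ((Xb - Xc)⁻¹ * (Xa - Xc) * Ya - Yb * (Yb - Yc)⁻¹ * (Ya - Yc))
        + ((Xc - Xb)⁻¹ * (Xa - Xb) * Ya - Yc * (Yc - Yb)⁻¹ * (Ya - Yb))
      = ((Xb - Xc)⁻¹ * (Xa - Xc) + (Xc - Xb)⁻¹ * (Xa - Xb)) * Ya
        - (Yb * (Yb - Yc)⁻¹ * (Ya - Yc) + Yc * (Yc - Yb)⁻¹ * (Ya - Yb)) := by noncomm_ring
    _ = 0 := by
      rw [inv_sub_mul_sub_add_inv_sub_mul_sub hX, one_mul,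
        mul_inv_sub_mul_sub_add_mul_inv_sub_mul_sub hY, sub_self]
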